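/- arXiv:1801.10336 — 2 statements merged into one kernel-verified Lean document; each statement's English description precedes it below -/
import Mathlib

section
/- Let a : ℝ → ℝ be continuous and bounded on [0,∞) satisfying a stable-type exponential dichotomy (exp(∫_τ^t a) ≤ C e^{−λ(t−τ)} for 0 ≤ τ ≤ t). Define S(t,u) = s²(t)·u² where s²(t) = ∫_t^∞ exp(2∫_t^v a) dv. Then there exist constants 0 < c₁ ≤ c₂ such that c₁·u² ≤ S(t,u) ≤ c₂·u² for all t ≥ 0 and u ∈ ℝ; specifically one may take c₁ = 1/(2a₀) with a₀ = sup|a| and c₂ = C²/(2λ). -/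
/-!
The integrand `exp (2 ∫_t^v a)` of `s²(t)` is squeezed between two exponentials: `|a| ≤ a₀` gives
`exp (-2 a₀ (v - t))` from below, and squaring the dichotomy estimate gives
`C² exp (-2 λ (v - t))` from above. Integrating over `[t, ∞)` yields `1/(2a₀) ≤ s²(t) ≤ C²/(2λ)`,
and comparing the two bounds at `t = 0` gives `c₁ ≤ c₂`.
-/

open Real MeasureTheory intervalIntegral Set

lemma exp_neg_mul_sub_eq (b t v : ℝ) : exp (-b * (v - t)) = exp (b * t) * exp (-b * v) := by
  rw [← exp_add]; ring_nf

lemma integrableOn_exp_neg_mul_sub_Ioi (t : ℝ) {b : ℝ} (hb : 0 < b) :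
    IntegrableOn (fun v => exp (-b * (v - t))) (Ioi t) := by
  simp only [exp_neg_mul_sub_eq]
  exact (integrableOn_exp_mul_Ioi (neg_neg_of_pos hb) t).const_mul (exp (b * t))

lemma integral_exp_neg_mul_sub_Ioi (t : ℝ) {b : ℝ} (hb : 0 < b) :
    ∫ v in Ioi t, exp (-b * (v - t)) = 1 / b := by
  simp only [exp_neg_mul_sub_eq, MeasureTheory.integral_const_mul, integral_exp_mul_Ioi (neg_neg_of_pos hb)]
  rw [neg_div_neg_eq, mul_div_assoc', ← exp_add, neg_mul, add_neg_cancel, exp_zero]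

lemma continuousOn_primitive_Ici {f : ℝ → ℝ} {t : ℝ} (hf : ContinuousOn f (Ici t)) :
    ContinuousOn (fun v => ∫ w in t..v, f w) (Ici t) := by
  intro v hv
  have hIcc : ContinuousOn (fun v => ∫ w in t..v, f w) (Icc t (v + 1)) := by
    have hint : IntegrableOn f (Icc t (v + 1)) := (hf.mono Icc_subset_Ici_self).integrableOn_Icc
    rw [← uIcc_of_le (by linarith [mem_Ici.1 hv])] at hint ⊢
    exact continuousOn_primitive_interval hint
  refine (hIcc v ⟨hv, by linarith⟩).mono_of_mem_nhdsWithin (mem_nhdsWithin.2 ?_)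
  exact ⟨Iio (v + 1), isOpen_Iio, by simp, fun x hx => ⟨hx.2, hx.1.le⟩⟩

lemma neg_mul_sub_le_integral {f : ℝ → ℝ} {M t v : ℝ} (htv : t ≤ v)
    (hf : ∀ x ∈ Ioc t v, |f x| ≤ M) : -(M * (v - t)) ≤ ∫ w in t..v, f w := by
  have h := norm_integral_le_of_norm_le_const (f := f) (a := t) (b := v) (C := M)
    (by rwa [uIoc_of_le htv])
  rw [Real.norm_eq_abs, abs_of_nonneg (sub_nonneg.2 htv)] at h
  exact neg_le_of_abs_le h

/-- The coefficient `s²(t)` of the quadratic Lyapunov function `S(t, u) = s²(t) u²`. -/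
noncomputable def lyapunovCoeff (a : ℝ → ℝ) (t : ℝ) : ℝ :=
  ∫ v in Ici t, exp (2 * ∫ w in t..v, a w)

section Dichotomy

variable {a : ℝ → ℝ} {C lam a₀ t : ℝ}

lemma exp_two_mul_integral_le
    (hdich : ∀ τ t : ℝ, 0 ≤ τ → τ ≤ t → exp (∫ s in τ..t, a s) ≤ C * exp (-lam * (t - τ)))
    (ht : 0 ≤ t) {v : ℝ} (hv : t ≤ v) :
    exp (2 * ∫ w in t..v, a w) ≤ C ^ 2 * exp (-(2 * lam) * (v - t)) :=
  calc exp (2 * ∫ w in t..v, a w) = exp (∫ w in t..v, a w) ^ 2 := by rw [← exp_nat_mul]; simp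
    _ ≤ (C * exp (-lam * (v - t))) ^ 2 := by gcongr; exact hdich t v ht hv
    _ = C ^ 2 * exp (-(2 * lam) * (v - t)) := by rw [mul_pow, ← exp_nat_mul]; ring_nf

lemma integrableOn_exp_two_mul_primitive (hlam : 0 < lam) (hcont : ContinuousOn a (Ici 0))
    (hdich : ∀ τ t : ℝ, 0 ≤ τ → τ ≤ t → exp (∫ s in τ..t, a s) ≤ C * exp (-lam * (t - τ)))
    (ht : 0 ≤ t) : IntegrableOn (fun v => exp (2 * ∫ w in t..v, a w)) (Ioi t) := by
  have hF : ContinuousOn (fun v => exp (2 * ∫ w in t..v, a w)) (Ioi t) :=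
    (continuous_exp.comp_continuousOn (continuousOn_const.mul
      (continuousOn_primitive_Ici (hcont.mono (Ici_subset_Ici.2 ht))))).mono Ioi_subset_Ici_self
  refine ((integrableOn_exp_neg_mul_sub_Ioi t (by positivity : 0 < 2 * lam)).const_mul
    (C ^ 2)).mono' (hF.aestronglyMeasurable measurableSet_Ioi) ?_
  filter_upwards [ae_restrict_mem measurableSet_Ioi] with v hv
  rw [Real.norm_of_nonneg (exp_pos _).le]
  exact exp_two_mul_integral_le hdich ht hv.le

lemma lyapunovCoeff_le (hlam : 0 < lam) (hcont : ContinuousOn a (Ici 0))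
    (hdich : ∀ τ t : ℝ, 0 ≤ τ → τ ≤ t → exp (∫ s in τ..t, a s) ≤ C * exp (-lam * (t - τ)))
    (ht : 0 ≤ t) : lyapunovCoeff a t ≤ C ^ 2 / (2 * lam) := by
  have h2lam : 0 < 2 * lam := by positivity
  calc lyapunovCoeff a t = ∫ v in Ioi t, exp (2 * ∫ w in t..v, a w) :=
        integral_Ici_eq_integral_Ioi
    _ ≤ ∫ v in Ioi t, C ^ 2 * exp (-(2 * lam) * (v - t)) :=
        setIntegral_mono_on (integrableOn_exp_two_mul_primitive hlam hcont hdich ht)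
          ((integrableOn_exp_neg_mul_sub_Ioi t h2lam).const_mul _) measurableSet_Ioi
          fun v hv => exp_two_mul_integral_le hdich ht (le_of_lt hv)
    _ = C ^ 2 / (2 * lam) := by
        rw [MeasureTheory.integral_const_mul, integral_exp_neg_mul_sub_Ioi t h2lam, mul_one_div]

lemma one_div_le_lyapunovCoeff (hlam : 0 < lam) (ha₀ : 0 < a₀) (hcont : ContinuousOn a (Ici 0))
    (hbound : ∀ t : ℝ, 0 ≤ t → |a t| ≤ a₀)
    (hdich : ∀ τ t : ℝ, 0 ≤ τ → τ ≤ t → exp (∫ s in τ..t, a s) ≤ C * exp (-lam * (t - τ)))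
    (ht : 0 ≤ t) : 1 / (2 * a₀) ≤ lyapunovCoeff a t := by
  have hlower : ∀ v ∈ Ioi t, exp (-(2 * a₀) * (v - t)) ≤ exp (2 * ∫ w in t..v, a w) := by
    intro v hv
    have h := neg_mul_sub_le_integral (le_of_lt hv) fun x hx => hbound x (ht.trans hx.1.le)
    rw [exp_le_exp]
    linarith
  calc 1 / (2 * a₀) = ∫ v in Ioi t, exp (-(2 * a₀) * (v - t)) :=
        (integral_exp_neg_mul_sub_Ioi t (by positivity)).symm
    _ ≤ ∫ v in Ioi t, exp (2 * ∫ w in t..v, a w) :=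
        setIntegral_mono_on (integrableOn_exp_neg_mul_sub_Ioi t (by positivity))
          (integrableOn_exp_two_mul_primitive hlam hcont hdich ht) measurableSet_Ioi hlower
    _ = lyapunovCoeff a t := integral_Ici_eq_integral_Ioi.symm

end Dichotomy

theorem stmt2_general (a : ℝ → ℝ) (C lam a₀ : ℝ) (hlam : 0 < lam) (ha₀ : 0 < a₀)
    (hcont : ContinuousOn a (Set.Ici 0))
    (hbound : ∀ t : ℝ, 0 ≤ t → |a t| ≤ a₀)
    (hdich : ∀ τ t : ℝ, 0 ≤ τ → τ ≤ t →
      Real.exp (∫ s in τ..t, a s) ≤ C * Real.exp (-lam * (t - τ)))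
    (S : ℝ → ℝ → ℝ)
    (hS : ∀ t u : ℝ, S t u = (∫ v in Set.Ici t, Real.exp (2 * ∫ w in t..v, a w)) * u ^ 2) :
    ∃ c₁ c₂ : ℝ, c₁ = 1 / (2 * a₀) ∧ c₂ = C ^ 2 / (2 * lam) ∧ 0 < c₁ ∧ c₁ ≤ c₂ ∧
      ∀ t u : ℝ, 0 ≤ t → c₁ * u ^ 2 ≤ S t u ∧ S t u ≤ c₂ * u ^ 2 := by
  have hlow t (ht : 0 ≤ t) := one_div_le_lyapunovCoeff hlam ha₀ hcont hbound hdich ht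
  have hup t (ht : 0 ≤ t) := lyapunovCoeff_le hlam hcont hdich ht
  refine ⟨_, _, rfl, rfl, by positivity, (hlow 0 le_rfl).trans (hup 0 le_rfl), ?_⟩
  intro t u ht
  rw [hS]
  exact ⟨mul_le_mul_of_nonneg_right (hlow t ht) (sq_nonneg u),
    mul_le_mul_of_nonneg_right (hup t ht) (sq_nonneg u)⟩

/-- two-sided estimate `c₁ u² ≤ S(t,u) ≤ c₂ u²` for the quadratic
Lyapunov function `S(t,u) = s²(t) u²`, with `c₁ = 1/(2a₀)` and `c₂ = C²/(2λ)`. -/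
theorem stmt2 (a : ℝ → ℝ) (C lam a₀ : ℝ) (hC : 0 < C) (hlam : 0 < lam) (ha₀ : 0 < a₀)
    (hcont : ContinuousOn a (Set.Ici 0))
    (hbound : ∀ t : ℝ, 0 ≤ t → |a t| ≤ a₀)
    (hdich : ∀ τ t : ℝ, 0 ≤ τ → τ ≤ t →
      Real.exp (∫ s in τ..t, a s) ≤ C * Real.exp (-lam * (t - τ)))
    (S : ℝ → ℝ → ℝ)
    (hS : ∀ t u : ℝ, S t u = (∫ v in Set.Ici t, Real.exp (2 * ∫ w in t..v, a w)) * u ^ 2) :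
    ∃ c₁ c₂ : ℝ, c₁ = 1 / (2 * a₀) ∧ c₂ = C ^ 2 / (2 * lam) ∧ 0 < c₁ ∧ c₁ ≤ c₂ ∧
      ∀ t u : ℝ, 0 ≤ t → c₁ * u ^ 2 ≤ S t u ∧ S t u ≤ c₂ * u ^ 2 :=
  stmt2_general a C lam a₀ hlam ha₀ hcont hbound hdich S hS
end

section
/- Let u(t) solve the scalar linear ODE u' = a(t)u + h(t,u) with h(t,0) = 0 and |h(t,u)| ≤ n(|u|)·|u| where n is continuous with n(0) = 0, and suppose a satisfies a stable-type exponential dichotomy on ℝ₊. Let S(t,u) = s²(t)u² with s² as above and let σ² = sup_t s²(t). Then there exists δ > 0 such that whenever 0 < |u₀| ≤ δ, the derivative of S along the solution satisfies (d/dt)S(t,u(t))|_{t=t₀} ≤ −u₀²/2 for any t₀ ≥ 0 with u(t₀) = u₀. -/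
open Real MeasureTheory intervalIntegral Set

/-!
The weight `s²(t) = ∫_t^∞ exp (2 ∫_t^v a)` solves `(s²)' = -2 a s² - 1`, so along a solution of
`u' = a u + h(t, u)` the linear part cancels in the derivative of `S = s² u²`, leaving
`-u² + 2 s² u h(t, u)`. The dichotomy bounds `s²` by `σ² = C² / (2λ)` on `t ≥ 0`, and since
`|h(t, u)| ≤ n(|u|) |u|` with `n(0) = 0`, the perturbation term is at most `u² / 2` once `|u|` is
small enough that `n(|u|) ≤ 1 / (4σ²)`.
-/

theorem integral_Ioi_exp_neg_mul_sub {b : ℝ} (hb : 0 < b) (t : ℝ) :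
    ∫ v in Ioi t, exp (-(b * (v - t))) = b⁻¹ := by
  have hsplit : (fun v => exp (-(b * (v - t)))) = fun v => exp (b * t) * exp (-b * v) := by
    ext v; rw [← exp_add]; ring_nf
  rw [hsplit, MeasureTheory.integral_const_mul, integral_exp_mul_Ioi (by linarith), neg_mul,
    exp_neg]
  field_simp

theorem integrableOn_exp_neg_mul_sub {b : ℝ} (hb : 0 < b) (t : ℝ) :
    IntegrableOn (fun v => exp (-(b * (v - t)))) (Ioi t) :=
  Integrable.of_integral_ne_zero (by rw [integral_Ioi_exp_neg_mul_sub hb]; positivity)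

theorem hasDerivAt_setIntegral_Ioi {E : Type*} [NormedAddCommGroup E] [NormedSpace ℝ E]
    [CompleteSpace E] {g : ℝ → E} (hg : Continuous g) {c : ℝ} (hc : IntegrableOn g (Ioi c))
    (t : ℝ) : HasDerivAt (fun s => ∫ v in Ioi s, g v) (-g t) t := by
  have hIoi : ∀ s, IntegrableOn g (Ioi s) := fun s =>
    (hg.integrableOn_Icc.union hc).mono_set fun v hv => by
      rcases le_or_gt v c with h | h
      exacts [Or.inl ⟨le_of_lt hv, h⟩, Or.inr h]
  have heq : (fun s => ∫ v in Ioi s, g v) = fun s => (∫ v in Ioi c, g v) - ∫ v in c..s, g v := by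
    ext s; rw [← integral_Ioi_sub_Ioi' hc (hIoi s), sub_sub_cancel]
  rw [heq]
  exact ((hg.integral_hasStrictDerivAt c t).hasDerivAt).const_sub _

section Weight

variable {a : ℝ → ℝ}

theorem integral_Ici_exp_mul_integral_eq (ha : Continuous a) (c t₁ s : ℝ) :
    ∫ v in Ici s, exp (c * ∫ w in s..v, a w) =
      exp (-(c * ∫ w in t₁..s, a w)) * ∫ v in Ioi s, exp (c * ∫ w in t₁..v, a w) := by
  rw [integral_Ici_eq_integral_Ioi, ← MeasureTheory.integral_const_mul]
  congr 1 with v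
  rw [← exp_add, ← integral_interval_sub_left (ha.intervalIntegrable t₁ v)
    (ha.intervalIntegrable t₁ s)]
  ring_nf

theorem hasDerivAt_integral_Ici_exp_mul_integral (ha : Continuous a) (c : ℝ) {t₁ : ℝ}
    (hint : IntegrableOn (fun v => exp (c * ∫ w in t₁..v, a w)) (Ioi t₁)) (t : ℝ) :
    HasDerivAt (fun s => ∫ v in Ici s, exp (c * ∫ w in s..v, a w))
      (-(c * a t) * (∫ v in Ici t, exp (c * ∫ w in t..v, a w)) - 1) t := by
  have hA : ∀ s, HasDerivAt (fun s => ∫ w in t₁..s, a w) (a s) s := fun s =>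
    (ha.integral_hasStrictDerivAt t₁ s).hasDerivAt
  have hAcont : Continuous fun s => ∫ w in t₁..s, a w :=
    continuous_iff_continuousAt.2 fun s => (hA s).continuousAt
  have hprod := ((hA t).const_mul c).neg.exp.mul
    (hasDerivAt_setIntegral_Ioi (continuous_const.mul hAcont).rexp hint t)
  rw [funext (integral_Ici_exp_mul_integral_eq ha c t₁), integral_Ici_exp_mul_integral_eq ha c t₁ t]
  refine hprod.congr_deriv ?_
  simp only [Pi.neg_apply, Pi.mul_apply]
  have hinv : exp (-(c * ∫ w in t₁..t, a w)) * exp (c * ∫ w in t₁..t, a w) = 1 := by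
    rw [← exp_add, neg_add_cancel, exp_zero]
  linear_combination -hinv

end Weight

/-- `exp (∫_τ^t a)` is the evolution operator of `u' = a u`, so this is the stable exponential
dichotomy estimate on `ℝ₊`. -/
def HasStableExpDichotomy (a : ℝ → ℝ) (C lam : ℝ) : Prop :=
  ∀ τ t : ℝ, 0 ≤ τ → τ ≤ t → exp (∫ s in τ..t, a s) ≤ C * exp (-lam * (t - τ))

namespace HasStableExpDichotomy

variable {a : ℝ → ℝ} {C lam : ℝ}

theorem exp_two_mul_integral_le (hd : HasStableExpDichotomy a C lam) {t v : ℝ} (ht : 0 ≤ t)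
    (htv : t ≤ v) : exp (2 * ∫ w in t..v, a w) ≤ C ^ 2 * exp (-(2 * lam * (v - t))) :=
  calc exp (2 * ∫ w in t..v, a w) = exp (∫ w in t..v, a w) ^ 2 := by
        rw [sq, ← exp_add, two_mul]
    _ ≤ (C * exp (-lam * (v - t))) ^ 2 := pow_le_pow_left₀ (exp_nonneg _) (hd t v ht htv) 2
    _ = C ^ 2 * exp (-(2 * lam * (v - t))) := by
        rw [mul_pow, sq (exp _), ← exp_add]; ring_nf

theorem integrableOn_exp_two_mul_integral (hd : HasStableExpDichotomy a C lam)
    (ha : Continuous a) (hlam : 0 < lam) {t : ℝ} (ht : 0 ≤ t) :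
    IntegrableOn (fun v => exp (2 * ∫ w in t..v, a w)) (Ioi t) := by
  refine Integrable.mono'
    ((integrableOn_exp_neg_mul_sub (b := 2 * lam) (by positivity) t).const_mul (C ^ 2))
    (continuous_const.mul (continuous_primitive ha.intervalIntegrable t)).rexp.aestronglyMeasurable
    ?_
  filter_upwards [ae_restrict_mem measurableSet_Ioi] with v hv
  rw [Real.norm_of_nonneg (exp_nonneg _)]
  exact hd.exp_two_mul_integral_le ht hv.le

theorem integral_Ici_exp_two_mul_integral_le (hd : HasStableExpDichotomy a C lam)
    (hlam : 0 < lam) {t : ℝ} (ht : 0 ≤ t) :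
    ∫ v in Ici t, exp (2 * ∫ w in t..v, a w) ≤ C ^ 2 / (2 * lam) := by
  rw [integral_Ici_eq_integral_Ioi]
  calc ∫ v in Ioi t, exp (2 * ∫ w in t..v, a w)
      ≤ ∫ v in Ioi t, C ^ 2 * exp (-(2 * lam * (v - t))) := by
        refine integral_mono_of_nonneg (.of_forall fun _ => exp_nonneg _)
          ((integrableOn_exp_neg_mul_sub (by positivity) t).const_mul _) ?_
        filter_upwards [ae_restrict_mem measurableSet_Ioi] with v hv
        exact hd.exp_two_mul_integral_le ht hv.le
    _ = C ^ 2 / (2 * lam) := by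
        rw [MeasureTheory.integral_const_mul, integral_Ioi_exp_neg_mul_sub (by positivity), div_eq_mul_inv]

end HasStableExpDichotomy

theorem hasDerivAt_mul_sq_of_hasDerivAt {s u : ℝ → ℝ} {t α f : ℝ}
    (hs : HasDerivAt s (-(2 * α) * s t - 1) t) (hu : HasDerivAt u (α * u t + f) t) :
    HasDerivAt (fun t => s t * u t ^ 2) (-u t ^ 2 + 2 * s t * u t * f) t := by
  refine (hs.mul (hu.pow 2)).congr_deriv ?_
  simp only [Pi.pow_apply]
  push_cast
  ring

theorem two_mul_mul_mul_le_half_sq {s M x y : ℝ} (hs : 0 ≤ s) (hsM : s ≤ M)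
    (hy : |y| ≤ (4 * M)⁻¹ * |x|) : 2 * s * x * y ≤ x ^ 2 / 2 := by
  rcases hs.eq_or_lt with rfl | hs_pos
  · simp only [mul_zero, zero_mul]
    positivity
  have hM : 0 < M := hs_pos.trans_le hsM
  calc 2 * s * x * y ≤ 2 * s * (|x| * |y|) := by
        rw [mul_assoc _ x, ← abs_mul]
        exact mul_le_mul_of_nonneg_left (le_abs_self _) (by positivity)
    _ ≤ 2 * M * (|x| * ((4 * M)⁻¹ * |x|)) := by gcongr
    _ = x ^ 2 / 2 := by
        rw [← sq_abs x]
        field_simp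
        ring

theorem stmt4_general (a : ℝ → ℝ) (C lam : ℝ) (hC : 0 < C) (hlam : 0 < lam)
    (hcont : Continuous a)
    (hdich : ∀ τ t : ℝ, 0 ≤ τ → τ ≤ t →
      Real.exp (∫ s in τ..t, a s) ≤ C * Real.exp (-lam * (t - τ)))
    (s2 : ℝ → ℝ)
    (hs2 : ∀ t : ℝ, s2 t = ∫ v in Set.Ici t, Real.exp (2 * ∫ w in t..v, a w))
    (h : ℝ → ℝ → ℝ)
    (n : ℝ → ℝ) (hncont : Continuous n) (hn0 : n 0 = 0)
    (hhn : ∀ t x : ℝ, |h t x| ≤ n |x| * |x|)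
    (u : ℝ → ℝ) (hu : ∀ t : ℝ, HasDerivAt u (a t * u t + h t (u t)) t) :
    ∃ δ : ℝ, 0 < δ ∧ ∀ t₀ u₀ : ℝ, 0 ≤ t₀ → u t₀ = u₀ → 0 < |u₀| → |u₀| ≤ δ →
      ∀ D : ℝ, HasDerivAt (fun t => s2 t * (u t) ^ 2) D t₀ → D ≤ -(u₀ ^ 2) / 2 := by
  obtain rfl : s2 = fun t => ∫ v in Ici t, exp (2 * ∫ w in t..v, a w) := funext hs2
  have hd : HasStableExpDichotomy a C lam := hdich
  have hs2_deriv := hasDerivAt_integral_Ici_exp_mul_integral hcont 2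
    (hd.integrableOn_exp_two_mul_integral hcont hlam le_rfl)
  set σ2 := C ^ 2 / (2 * lam)
  obtain ⟨δ, hδ, hnδ⟩ := Metric.eventually_nhds_iff.1 <|
    (hn0 ▸ hncont.tendsto 0).eventually_lt_const (inv_pos.2 (by positivity : 0 < 4 * σ2))
  refine ⟨δ / 2, half_pos hδ, fun t₀ u₀ ht₀ hut₀ _ hu₀ D hD => ?_⟩
  subst hut₀
  have hn : n |u t₀| ≤ (4 * σ2)⁻¹ :=
    (hnδ (by rw [Real.dist_eq, sub_zero, abs_abs]; linarith)).le
  have hh : |h t₀ (u t₀)| ≤ (4 * σ2)⁻¹ * |u t₀| :=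
    (hhn t₀ (u t₀)).trans (mul_le_mul_of_nonneg_right hn (abs_nonneg _))
  rw [hD.unique (hasDerivAt_mul_sq_of_hasDerivAt (hs2_deriv t₀) (hu t₀))]
  have := two_mul_mul_mul_le_half_sq
    (setIntegral_nonneg measurableSet_Ici fun v _ => (exp_pos _).le)
    (hd.integral_Ici_exp_two_mul_integral_le hlam ht₀) hh
  linarith

/-- the Lyapunov function `S(t,u) = s²(t)u²` decreases along
solutions of `u' = a(t)u + h(t,u)`: there is `δ > 0` such that for
`0 < |u₀| ≤ δ` the derivative of `t ↦ S(t,u(t))` at `t₀` is `≤ -u₀²/2`. -/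
theorem stmt4 (a : ℝ → ℝ) (C lam : ℝ) (hC : 0 < C) (hlam : 0 < lam)
    (hcont : Continuous a)
    (hdich : ∀ τ t : ℝ, 0 ≤ τ → τ ≤ t →
      Real.exp (∫ s in τ..t, a s) ≤ C * Real.exp (-lam * (t - τ)))
    (s2 : ℝ → ℝ)
    (hs2 : ∀ t : ℝ, s2 t = ∫ v in Set.Ici t, Real.exp (2 * ∫ w in t..v, a w))
    (h : ℝ → ℝ → ℝ) (hhcont : Continuous fun p : ℝ × ℝ => h p.1 p.2)
    (hh0 : ∀ t : ℝ, h t 0 = 0)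
    (n : ℝ → ℝ) (hncont : Continuous n) (hn0 : n 0 = 0)
    (hhn : ∀ t x : ℝ, |h t x| ≤ n |x| * |x|)
    (u : ℝ → ℝ) (hu : ∀ t : ℝ, HasDerivAt u (a t * u t + h t (u t)) t) :
    ∃ δ : ℝ, 0 < δ ∧ ∀ t₀ u₀ : ℝ, 0 ≤ t₀ → u t₀ = u₀ → 0 < |u₀| → |u₀| ≤ δ →
      ∀ D : ℝ, HasDerivAt (fun t => s2 t * (u t) ^ 2) D t₀ → D ≤ -(u₀ ^ 2) / 2 :=
  stmt4_general a C lam hC hlam hcont hdich s2 hs2 h n hncont hn0 hhn u hu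
end
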